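/- arXiv:2110.03115 — 3 statements merged into one kernel-verified Lean document; each statement's English description precedes it below -/
import Mathlib

section
/- Let $I \subseteq [0,1]$ be a finite set of real numbers with $0 \notin I$, and define $D(I) := \{1 - \frac{1}{m} + \sum_j \frac{r_j b_j}{m} \mid m \in \mathbb{Z}_{>0},\ r_j \in \mathbb{Z}_{\ge 0},\ b_j \in I\} \cap [0,1]$. Then for every $c > 0$, the set $D(I) \cap [0, 1-c]$ is finite. -/
/-- The adjunction coefficient set `D(I)`:  real numbers of the form
`1 - 1/m + (∑_{b ∈ I} r_b · b)/m` with `m ∈ ℤ_{>0}` and `r_b ∈ ℤ_{≥0}`,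
intersected with `[0,1]`. -/
def DSet (I : Finset ℝ) : Set ℝ :=
  {x : ℝ | (∃ m : ℕ, 0 < m ∧ ∃ r : ℝ → ℕ,
      x = 1 - 1 / (m : ℝ) + (∑ b ∈ I, (r b : ℝ) * b) / (m : ℝ)) ∧
    x ∈ Set.Icc (0 : ℝ) 1}

/-- Let `I ⊆ [0,1]` be a finite set of real numbers with `0 ∉ I`.
Then for every `c > 0`, the set `D(I) ∩ [0, 1-c]` is finite. -/
theorem DSet_inter_Icc_finite (I : Finset ℝ) (hI : ∀ b ∈ I, b ∈ Set.Icc (0 : ℝ) 1)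
    (h0 : (0 : ℝ) ∉ I) (c : ℝ) (hc : 0 < c) :
    (DSet I ∩ Set.Icc (0 : ℝ) (1 - c)).Finite := by
  classical
  have hfin : (Set.Iic (⌈1/c⌉₊) ×ˢ Set.univ.pi fun b : ↥I => Set.Iic ⌈1/(b:ℝ)⌉₊).Finite :=
    (Set.finite_Iic _).prod (Set.Finite.pi fun b => Set.finite_Iic _)
  apply (hfin.image (fun p : ℕ × (↥I → ℕ) =>
      1 - 1/(p.1:ℝ) + (∑ b : ↥I, (p.2 b : ℝ) * (b:ℝ))/(p.1:ℝ))).subset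
  rintro x ⟨⟨⟨m, hm, r, hx⟩, hx0, hx1⟩, _, hxc⟩
  have hmR : (0:ℝ) < m := by exact_mod_cast hm
  set S := ∑ b ∈ I, (r b : ℝ) * b with hS
  have hSnonneg : 0 ≤ S :=
    Finset.sum_nonneg fun b hb => mul_nonneg (Nat.cast_nonneg _) (hI b hb).1
  have key : S + c * m ≤ 1 := by
    rw [hx] at hxc
    have h2 : S/m + c ≤ 1/m := by linarith
    have h3 := mul_le_mul_of_nonneg_right h2 hmR.le
    have e1 : S/m*m = S := div_mul_cancel₀ S hmR.ne'
    have e2 : 1/m*(m:ℝ) = 1 := div_mul_cancel₀ 1 hmR.ne'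
    nlinarith [h3]
  have hS1 : S ≤ 1 := by nlinarith
  have hmle : m ≤ ⌈1/c⌉₊ := by
    have h1 : (m:ℝ) ≤ 1/c := by
      rw [le_div_iff₀ hc]; nlinarith
    exact_mod_cast h1.trans (Nat.le_ceil _)
  refine ⟨(m, fun b : ↥I => r b), ⟨hmle, fun b _ => ?_⟩, ?_⟩
  · have hb : (b:ℝ) ∈ I := b.2
    have hbpos : (0:ℝ) < b :=
      lt_of_le_of_ne (hI _ hb).1 (fun h => h0 (h ▸ hb))
    have hsingle : (r b : ℝ) * b ≤ S :=
      Finset.single_le_sum (f := fun b => (r b : ℝ) * b)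
        (fun i hi => mul_nonneg (Nat.cast_nonneg _) (hI i hi).1) hb
    have h1 : (r (b:ℝ) : ℝ) ≤ 1/(b:ℝ) := by
      rw [le_div_iff₀ hbpos]; linarith
    exact_mod_cast h1.trans (Nat.le_ceil _)
  · simp only
    rw [Finset.sum_coe_sort I (fun b => (r b : ℝ) * b)]
    exact hx.symm
end

section
/- Let $I \subseteq [0,1]$ be a finite set. Then $1$ is the only possible accumulation point of the set $D(I) = \{1 - \frac{1}{m} + \sum_j \frac{r_j b_j}{m} \mid m \in \mathbb{Z}_{>0},\ r_j \in \mathbb{Z}_{\ge 0},\ b_j \in I,\ b_j > 0\} \cap [0,1]$. -/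
/-!
An element of `D(I)` is `1 - (1 - s) / m` with `s` a nonnegative integer combination of the
positive elements of `I`. Staying below a fixed `c < 1` forces `m < 1 / (1 - c)`, and staying in
`[0, 1]` forces `s ≤ 1`; since the positive elements of `I` are bounded away from `0`, only
finitely many such `s` exist. Hence `D(I) ∩ (-∞, c)` is finite for every `c < 1`, so no point
below `1` accumulates, while accumulation points lie in the closure, inside `[0, 1]`.
-/

/-- The adjunction coefficient set `D(I)` where only the *positive* elements `b ∈ I`
are allowed to appear in the sum `∑ r_b · b`. -/
def DSetPos (I : Finset ℝ) : Set ℝ :=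
  {x : ℝ | (∃ m : ℕ, 0 < m ∧ ∃ r : ℝ → ℕ,
      x = 1 - 1 / (m : ℝ) + (∑ b ∈ I.filter (fun b => 0 < b), (r b : ℝ) * b) / (m : ℝ)) ∧
    x ∈ Set.Icc (0 : ℝ) 1}

open Set

section FloorField

variable {K : Type*} [Field K] [LinearOrder K] [IsStrictOrderedRing K] [FloorSemiring K]

lemma finite_setOf_natMul_le {a : K} (ha : 0 < a) (t : K) :
    {u : K | ∃ k : ℕ, u = k * a ∧ u ≤ t}.Finite := by
  refine ((finite_Iic ⌊t / a⌋₊).image fun k : ℕ => (k : K) * a).subset ?_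
  rintro _ ⟨k, rfl, hk⟩
  exact ⟨k, Nat.le_floor ((le_div_iff₀ ha).2 hk), rfl⟩

lemma finite_setOf_sum_natMul_le (J : Finset K) (hJ : ∀ b ∈ J, 0 < b) (t : K) :
    {s : K | ∃ r : K → ℕ, s = ∑ b ∈ J, (r b : K) * b ∧ s ≤ t}.Finite := by
  classical
  induction J using Finset.induction_on generalizing t with
  | empty => exact (finite_singleton 0).subset fun s ⟨_, hs, _⟩ => by simpa using hs
  | insert a J haJ ih =>
    have ha : 0 < a := hJ a (Finset.mem_insert_self a J)
    have hJ' : ∀ b ∈ J, 0 < b := fun b hb => hJ b (Finset.mem_insert_of_mem hb)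
    refine ((finite_setOf_natMul_le ha t).image2 (· + ·) (ih hJ' t)).subset ?_
    rintro _ ⟨r, rfl, hs⟩
    rw [Finset.sum_insert haJ] at hs ⊢
    have hhead : 0 ≤ (r a : K) * a := by positivity
    have htail : 0 ≤ ∑ b ∈ J, (r b : K) * b :=
      Finset.sum_nonneg fun b hb => mul_nonneg (Nat.cast_nonneg _) (hJ' b hb).le
    exact ⟨_, ⟨r a, rfl, by linarith⟩, _, ⟨r, rfl, by linarith⟩, rfl⟩

end FloorField

lemma DSetPos_inter_Iio_finite (I : Finset ℝ) {c : ℝ} (hc : c < 1) :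
    (DSetPos I ∩ Iio c).Finite := by
  set J := I.filter (fun b => 0 < b)
  have hJ : ∀ b ∈ J, 0 < b := fun b hb => (Finset.mem_filter.1 hb).2
  refine (((finite_Iic ⌈(1 - c)⁻¹⌉₊).prod (finite_setOf_sum_natMul_le J hJ 1)).image
    fun p : ℕ × ℝ => 1 - 1 / (p.1 : ℝ) + p.2 / p.1).subset ?_
  rintro _ ⟨⟨⟨m, hm, r, rfl⟩, -, hy1⟩, hyc⟩
  set s := ∑ b ∈ J, (r b : ℝ) * b
  have hm' : (0 : ℝ) < m := Nat.cast_pos.2 hm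
  have hs0 : 0 ≤ s := Finset.sum_nonneg fun b hb => mul_nonneg (Nat.cast_nonneg _) (hJ b hb).le
  have hs1 : s ≤ 1 := by
    have : s / m ≤ 1 / m := by linarith
    exact (div_le_div_iff_of_pos_right hm').1 this
  have hmc : (m : ℝ) < (1 - c)⁻¹ := by
    have : 1 - c < 1 / (m : ℝ) := by linarith [div_nonneg hs0 hm'.le, mem_Iio.1 hyc]
    rw [lt_inv_comm₀ hm' (by linarith)]
    simpa using this
  exact ⟨(m, s), ⟨(Nat.lt_ceil.2 hmc).le, r, rfl, hs1⟩, rfl⟩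

theorem DSetPos_accPt_eq_one_general (I : Finset ℝ)
    (x : ℝ) (hx : AccPt x (Filter.principal (DSetPos I))) : x = 1 := by
  have hx1 : x ≤ 1 :=
    (closure_minimal (fun _ hy => hy.2) isClosed_Icc hx.clusterPt.mem_closure :
      x ∈ Icc (0 : ℝ) 1).2
  refine hx1.eq_or_lt.resolve_right fun hxlt => ?_
  have hxc : x < (x + 1) / 2 := by linarith
  have hinf := Set.Infinite.of_accPt (hx.nhds_inter (Iio_mem_nhds hxc))
  rw [inter_comm] at hinf
  exact hinf (DSetPos_inter_Iio_finite I (by linarith))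

/-- Let `I ⊆ [0,1]` be a finite set.  Then `1` is the only possible
accumulation point of the set `D(I)`. -/
theorem DSetPos_accPt_eq_one (I : Finset ℝ) (hI : ∀ b ∈ I, b ∈ Set.Icc (0 : ℝ) 1)
    (x : ℝ) (hx : AccPt x (Filter.principal (DSetPos I))) : x = 1 :=
  DSetPos_accPt_eq_one_general I x hx
end

section
/- The set of standard coefficients $\Gamma = \{1\} \cup \{1 - \frac{1}{m} \mid m \in \mathbb{Z}_{>0}\}$ satisfies $D(\Gamma) = \Gamma$, i.e. for any $m \in \mathbb{Z}_{>0}$, nonnegative integers $r_j$, and elements $b_j \in \Gamma$, if $x = 1 - \frac{1}{m} + \sum_j \frac{r_j b_j}{m}$ lies in $[0,1]$, then $x \in \Gamma$. -/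
/-- The set of standard coefficients `Γ = {1} ∪ {1 - 1/m : m ∈ ℤ_{>0}}`. -/
def StandardSet : Set ℝ :=
  {x : ℝ | x = 1 ∨ ∃ m : ℕ, 0 < m ∧ x = 1 - 1 / (m : ℝ)}

lemma standardSet_nonneg {x : ℝ} (hx : x ∈ StandardSet) : 0 ≤ x := by
  rcases hx with h | ⟨m, hm, h⟩
  · simp [h]
  · have : (1 : ℝ) ≤ m := by exact_mod_cast hm
    have : 1 / (m : ℝ) ≤ 1 := by
      rw [div_le_one (by linarith)]; linarith
    linarith [h]

lemma standardSet_sum_cases : ∀ k (r : Fin k → ℕ) (b : Fin k → ℝ),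
    (∀ j, b j ∈ StandardSet) →
    (1 ≤ ∑ j, (r j : ℝ) * b j) ∨
      ∃ t : ℕ, 0 < t ∧ ∑ j, (r j : ℝ) * b j = 1 - 1 / (t : ℝ) := by
  intro k
  induction k with
  | zero =>
    intro r b hb
    right
    exact ⟨1, one_pos, by simp⟩
  | succ n ih =>
    intro r b hb
    have hsum : ∑ j, (r j : ℝ) * b j
        = (r 0 : ℝ) * b 0 + ∑ j : Fin n, (r j.succ : ℝ) * b j.succ :=
      Fin.sum_univ_succ _
    have hb0 := hb 0
    have hb0nn : (0:ℝ) ≤ b 0 := standardSet_nonneg hb0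
    have hann : (0:ℝ) ≤ (r 0 : ℝ) * b 0 :=
      mul_nonneg (by positivity) hb0nn
    rcases ih (fun j => r j.succ) (fun j => b j.succ) (fun j => hb j.succ) with
      h1 | ⟨t, ht, hteq⟩
    · left; rw [hsum]; linarith
    · -- tail sum = 1 - 1/t
      rcases Nat.eq_zero_or_pos (r 0) with hr0 | hr0
    -- r 0 = 0 : same as tail
      · right
        refine ⟨t, ht, ?_⟩
        rw [hsum, hr0, hteq]; push_cast; ring
      · have hr1 : (1:ℝ) ≤ (r 0 : ℝ) := by exact_mod_cast hr0
        rcases hb0 with hbe | ⟨m', hm', hbe⟩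
        · -- b 0 = 1, r 0 ≥ 1 so a ≥ 1
          left
          have htnn : (0:ℝ) ≤ 1 - 1 / (t:ℝ) := by
            have : (1:ℝ) ≤ t := by exact_mod_cast ht
            have : 1 / (t:ℝ) ≤ 1 := by rw [div_le_one (by linarith)]; linarith
            linarith
          rw [hsum, hbe, hteq]; nlinarith
        · -- b 0 = 1 - 1/m'
          rcases Nat.lt_or_ge m' 2 with hm'2 | hm'2
          · -- m' = 1, b 0 = 0
            interval_cases m'
            right
            refine ⟨t, ht, ?_⟩
            rw [hsum, hbe, hteq]; norm_num
          · have hm'r : (2:ℝ) ≤ (m' : ℝ) := by exact_mod_cast hm'2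
            have hbhalf : (1:ℝ)/2 ≤ b 0 := by
              rw [hbe]
              have : 1 / (m':ℝ) ≤ 1/2 := by
                rw [div_le_div_iff₀ (by linarith) (by norm_num)]; linarith
              linarith
            rcases Nat.lt_or_ge t 2 with ht2 | ht2
            · -- t = 1, tail sum = 0
              interval_cases t
              rcases Nat.lt_or_ge (r 0) 2 with hrr | hrr
              · -- r 0 = 1
                have : r 0 = 1 := by omega
                right
                refine ⟨m', hm', ?_⟩
                rw [hsum, hbe, hteq, this]; norm_num
              · left
                have : (2:ℝ) ≤ (r 0 : ℝ) := by exact_mod_cast hrr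
                rw [hsum, hteq]; nlinarith
            · -- t ≥ 2 : tail sum ≥ 1/2, a ≥ 1/2
              left
              have htr : (2:ℝ) ≤ (t : ℝ) := by exact_mod_cast ht2
              have : 1 / (t:ℝ) ≤ 1/2 := by
                rw [div_le_div_iff₀ (by linarith) (by norm_num)]; linarith
              rw [hsum, hteq]; nlinarith

/-- The standard coefficient set satisfies `D(Γ) = Γ`: for any
`m ∈ ℤ_{>0}`, nonnegative integers `r_j` and elements `b_j ∈ Γ`, if
`x = 1 - 1/m + (∑ j, r_j b_j)/m` lies in `[0,1]` then `x ∈ Γ`. -/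
theorem standardSet_stable_under_adjunction (m : ℕ) (hm : 0 < m) (k : ℕ)
    (r : Fin k → ℕ) (b : Fin k → ℝ) (hb : ∀ j, b j ∈ StandardSet) (x : ℝ)
    (hx : x = 1 - 1 / (m : ℝ) + (∑ j, (r j : ℝ) * b j) / (m : ℝ))
    (hx0 : 0 ≤ x) (hx1 : x ≤ 1) : x ∈ StandardSet := by
  have hmr : (1:ℝ) ≤ (m : ℝ) := by exact_mod_cast hm
  have hmpos : (0:ℝ) < (m : ℝ) := by linarith
  rcases standardSet_sum_cases k r b hb with h1 | ⟨t, ht, hteq⟩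
  · left
    have : 1 / (m:ℝ) ≤ (∑ j, (r j : ℝ) * b j) / (m:ℝ) := by
      exact div_le_div_of_nonneg_right h1 hmpos.le
    have hge : 1 ≤ x := by rw [hx]; linarith
    linarith
  · right
    refine ⟨m * t, Nat.mul_pos hm ht, ?_⟩
    have htpos : (0:ℝ) < (t:ℝ) := by exact_mod_cast ht
    rw [hx, hteq]
    push_cast
    field_simp
    ring
end
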